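/- arXiv:2102.04947 — 3 statements merged into one kernel-verified Lean document; each statement's English description precedes it below -/
import Mathlib

section
/- The complete elliptic integral of the second kind satisfies the Gauß transformation: E(k) = (1 + k') E(k₁) - k'(1 + k₁) K(k₁), where k' = √(1-k²) and k₁ = (1-k')/(1+k'), for all 0 < k < 1. -/
open Real MeasureTheory Set Filter

noncomputable def Kel (k : ℝ) : ℝ :=
  ∫ θ in (0:ℝ)..(π/2), 1 / Real.sqrt (1 - k^2 * Real.sin θ ^ 2)

noncomputable def Eel (k : ℝ) : ℝ :=
  ∫ θ in (0:ℝ)..(π/2), Real.sqrt (1 - k^2 * Real.sin θ ^ 2)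

/-!
Put `m = k₁`, so that `k² = 4m/(1+m)²`. The Gauss substitution
`sin θ = (1+m) sin φ / (1 + m sin² φ)` maps `[0, π/2]` onto itself and turns `E(k)` into
`∫ (1+m)(1 - m sin² φ)² / ((1 + m sin² φ)² Δ(m, φ)) dφ`, where `Δ(m, φ) = √(1 - m² sin² φ)`.
This integrand differs from `2/(1+m) · Δ(m, φ) - (1-m)/Δ(m, φ)` by the derivative of
`2m/(1+m) · sin φ cos φ Δ(m, φ) / (1 + m sin² φ)`, which vanishes at both ends, so
`E(k) = 2/(1+m) · E(m) - (1-m) K(m)`; finally `2/(1+k₁) = 1+k'` and `1-k₁ = k'(1+k₁)`.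
-/

noncomputable def ellipticDelta (k θ : ℝ) : ℝ := √(1 - k ^ 2 * sin θ ^ 2)

section ellipticDelta

variable {k : ℝ}

lemma Eel_eq_integral_ellipticDelta (k : ℝ) : Eel k = ∫ θ in 0..π / 2, ellipticDelta k θ := rfl

lemma Kel_eq_integral_ellipticDelta (k : ℝ) :
    Kel k = ∫ θ in 0..π / 2, 1 / ellipticDelta k θ := rfl

@[fun_prop]
lemma continuous_ellipticDelta (k : ℝ) : Continuous (ellipticDelta k) := by
  unfold ellipticDelta
  fun_prop

lemma one_sub_sq_mul_sin_sq_pos (hk : k ^ 2 < 1) (θ : ℝ) : 0 < 1 - k ^ 2 * sin θ ^ 2 := by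
  nlinarith [sin_sq_le_one θ, sq_nonneg (sin θ), sq_nonneg k]

lemma ellipticDelta_pos (hk : k ^ 2 < 1) (θ : ℝ) : 0 < ellipticDelta k θ :=
  sqrt_pos.2 (one_sub_sq_mul_sin_sq_pos hk θ)

lemma ellipticDelta_sq (hk : k ^ 2 < 1) (θ : ℝ) :
    ellipticDelta k θ ^ 2 = 1 - k ^ 2 * sin θ ^ 2 :=
  sq_sqrt (one_sub_sq_mul_sin_sq_pos hk θ).le

lemma hasDerivAt_ellipticDelta (hk : k ^ 2 < 1) (θ : ℝ) :
    HasDerivAt (ellipticDelta k) (-(k ^ 2 * sin θ * cos θ) / ellipticDelta k θ) θ := by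
  have h := (((hasDerivAt_sin θ).fun_pow 2).const_mul (k ^ 2) |>.const_sub 1).sqrt
    (one_sub_sq_mul_sin_sq_pos hk θ).ne'
  exact h.congr_deriv (by rw [ellipticDelta]; push_cast; ring)

end ellipticDelta

noncomputable def gaussSin (m φ : ℝ) : ℝ := (1 + m) * sin φ / (1 + m * sin φ ^ 2)

noncomputable def gaussSubst (m φ : ℝ) : ℝ := arcsin (gaussSin m φ)

section gaussSubst

variable {m : ℝ}

lemma one_add_mul_sin_sq_pos (hm : -1 < m) (φ : ℝ) : 0 < 1 + m * sin φ ^ 2 := by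
  rcases le_total 0 m with h | h
  · positivity
  · nlinarith [sin_sq_le_one φ]

lemma continuous_gaussSin (hm : -1 < m) : Continuous (gaussSin m) :=
  Continuous.div (by fun_prop) (by fun_prop) (one_add_mul_sin_sq_pos hm · |>.ne')

lemma gaussSin_zero (m : ℝ) : gaussSin m 0 = 0 := by simp [gaussSin]

lemma gaussSin_pi_div_two (hm : -1 < m) : gaussSin m (π / 2) = 1 := by
  simp only [gaussSin, sin_pi_div_two]
  field_simp [show 1 + m ≠ 0 by linarith]

lemma gaussSin_nonneg (hm : -1 < m) {φ : ℝ} (hφ : 0 ≤ sin φ) : 0 ≤ gaussSin m φ :=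
  div_nonneg (mul_nonneg (by linarith) hφ) (one_add_mul_sin_sq_pos hm φ).le

-- `1 + m sin² φ - (1 + m) sin φ = (1 - sin φ) (1 - m sin φ)`
lemma gaussSin_le_one (hm₀ : -1 < m) (hm₁ : m < 1) {φ : ℝ} (hφ : 0 ≤ sin φ) :
    gaussSin m φ ≤ 1 := by
  have hsin₁ := sin_le_one φ
  rw [gaussSin, div_le_one (one_add_mul_sin_sq_pos hm₀ φ)]
  nlinarith [mul_nonneg (sub_nonneg.2 hsin₁) (show 0 ≤ 1 - m * sin φ by nlinarith)]

lemma gaussSin_lt_one (hm₀ : -1 < m) (hm₁ : m < 1) {φ : ℝ} (hφ : 0 ≤ sin φ) (hφ₁ : sin φ < 1) :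
    gaussSin m φ < 1 := by
  rw [gaussSin, div_lt_one (one_add_mul_sin_sq_pos hm₀ φ)]
  nlinarith [mul_pos (sub_pos.2 hφ₁) (show 0 < 1 - m * sin φ by nlinarith)]

lemma one_sub_gaussSin_sq (hm₀ : -1 < m) (hm₁ : m < 1) (φ : ℝ) :
    1 - gaussSin m φ ^ 2 = (cos φ * ellipticDelta m φ / (1 + m * sin φ ^ 2)) ^ 2 := by
  have := one_add_mul_sin_sq_pos hm₀ φ
  rw [div_pow, mul_pow, ellipticDelta_sq (by nlinarith), cos_sq', gaussSin]
  field_simp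
  ring

lemma one_sub_sq_mul_gaussSin_sq {k : ℝ} (hm : -1 < m) (hk : k ^ 2 = 4 * m / (1 + m) ^ 2)
    (φ : ℝ) :
    1 - k ^ 2 * gaussSin m φ ^ 2 = ((1 - m * sin φ ^ 2) / (1 + m * sin φ ^ 2)) ^ 2 := by
  have := one_add_mul_sin_sq_pos hm φ
  rw [hk, gaussSin]
  field_simp [show 1 + m ≠ 0 by linarith]
  ring

lemma hasDerivAt_gaussSin (hm : -1 < m) (φ : ℝ) :
    HasDerivAt (gaussSin m)
      ((1 + m) * cos φ * (1 - m * sin φ ^ 2) / (1 + m * sin φ ^ 2) ^ 2) φ := by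
  have h := ((hasDerivAt_sin φ).const_mul (1 + m)).fun_div
    (((hasDerivAt_sin φ).fun_pow 2).const_mul m |>.const_add 1) (one_add_mul_sin_sq_pos hm φ).ne'
  exact h.congr_deriv (by push_cast; ring)

lemma gaussSubst_zero (m : ℝ) : gaussSubst m 0 = 0 := by
  rw [gaussSubst, gaussSin_zero, arcsin_zero]

lemma gaussSubst_pi_div_two (hm : -1 < m) : gaussSubst m (π / 2) = π / 2 := by
  rw [gaussSubst, gaussSin_pi_div_two hm, arcsin_one]

lemma hasDerivAt_gaussSubst (hm₀ : -1 < m) (hm₁ : m < 1) {φ : ℝ} (hφ : φ ∈ Ioo 0 (π / 2)) :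
    HasDerivAt (gaussSubst m)
      ((1 + m) * (1 - m * sin φ ^ 2) / ((1 + m * sin φ ^ 2) * ellipticDelta m φ)) φ := by
  have hsin : 0 < sin φ := sin_pos_of_pos_of_lt_pi hφ.1 (by linarith [hφ.2, pi_pos])
  have hcos : 0 < cos φ := cos_pos_of_mem_Ioo ⟨by linarith [hφ.1, pi_pos], hφ.2⟩
  have hsin₁ : sin φ < 1 := by nlinarith [sin_sq_add_cos_sq φ]
  have hD := one_add_mul_sin_sq_pos hm₀ φ
  have hΔ := ellipticDelta_pos (show m ^ 2 < 1 by nlinarith) φ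
  have hroot : √(1 - gaussSin m φ ^ 2) = cos φ * ellipticDelta m φ / (1 + m * sin φ ^ 2) := by
    rw [one_sub_gaussSin_sq hm₀ hm₁, sqrt_sq (by positivity)]
  have h := (hasDerivAt_arcsin (by linarith [gaussSin_nonneg hm₀ hsin.le])
    (gaussSin_lt_one hm₀ hm₁ hsin.le hsin₁).ne).comp φ (hasDerivAt_gaussSin hm₀ φ)
  refine h.congr_deriv ?_
  rw [hroot]
  field_simp

lemma ellipticDelta_gaussSubst {k : ℝ} (hm₀ : -1 < m) (hm₁ : m < 1)
    (hk : k ^ 2 = 4 * m / (1 + m) ^ 2) {φ : ℝ} (hφ : 0 ≤ sin φ) :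
    ellipticDelta k (gaussSubst m φ) = (1 - m * sin φ ^ 2) / (1 + m * sin φ ^ 2) := by
  have hD := one_add_mul_sin_sq_pos hm₀ φ
  rw [ellipticDelta, gaussSubst, sin_arcsin (by linarith [gaussSin_nonneg hm₀ hφ])
    (gaussSin_le_one hm₀ hm₁ hφ), one_sub_sq_mul_gaussSin_sq hm₀ hk, sqrt_sq]
  have := sin_sq_le_one φ
  exact div_nonneg (by nlinarith) hD.le

end gaussSubst

noncomputable def gaussIntegrand (m φ : ℝ) : ℝ :=
  (1 + m) * (1 - m * sin φ ^ 2) ^ 2 / ((1 + m * sin φ ^ 2) ^ 2 * ellipticDelta m φ)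

section gaussIntegrand

variable {m : ℝ}

open intervalIntegral

theorem Eel_eq_integral_gaussIntegrand {k : ℝ} (hm₀ : -1 < m) (hm₁ : m < 1)
    (hk : k ^ 2 = 4 * m / (1 + m) ^ 2) :
    Eel k = ∫ φ in 0..π / 2, gaussIntegrand m φ := by
  have hm : m ^ 2 < 1 := by nlinarith
  have hD := one_add_mul_sin_sq_pos hm₀
  have hΔ := ellipticDelta_pos hm
  have hcont : Continuous fun φ ↦
      (1 + m) * (1 - m * sin φ ^ 2) / ((1 + m * sin φ ^ 2) * ellipticDelta m φ) :=
    Continuous.div (by fun_prop) (by fun_prop)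
      fun φ ↦ (mul_pos (hD φ) (hΔ φ)).ne'
  have h₀ : (0 : ℝ) ≤ π / 2 := by positivity
  have hsubst := integral_comp_mul_deriv'' (a := 0) (b := π / 2) (f := gaussSubst m)
    ((continuous_arcsin.comp (continuous_gaussSin hm₀)).continuousOn)
    (fun φ hφ ↦ (hasDerivAt_gaussSubst hm₀ hm₁
      (by rwa [min_eq_left h₀, max_eq_right h₀] at hφ)).hasDerivWithinAt)
    hcont.continuousOn (continuous_ellipticDelta k).continuousOn
  rw [gaussSubst_zero, gaussSubst_pi_div_two hm₀] at hsubst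
  rw [Eel_eq_integral_ellipticDelta, ← hsubst]
  refine integral_congr fun φ hφ ↦ ?_
  rw [uIcc_of_le h₀] at hφ
  have hsin : 0 ≤ sin φ := sin_nonneg_of_nonneg_of_le_pi hφ.1 (by linarith [hφ.2, pi_pos])
  simp only [Function.comp_apply, ellipticDelta_gaussSubst hm₀ hm₁ hk hsin, gaussIntegrand]
  have := hΔ φ
  field_simp [(hD φ).ne']

noncomputable def gaussCorrection (m φ : ℝ) : ℝ :=
  2 * m / (1 + m) * (sin φ * cos φ * ellipticDelta m φ / (1 + m * sin φ ^ 2))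

lemma hasDerivAt_gaussCorrection (hm₀ : -1 < m) (hm₁ : m < 1) (φ : ℝ) :
    HasDerivAt (gaussCorrection m)
      (gaussIntegrand m φ - (2 / (1 + m) * ellipticDelta m φ - (1 - m) * (1 / ellipticDelta m φ)))
      φ := by
  have hm : m ^ 2 < 1 := by nlinarith
  have h := (((hasDerivAt_sin φ).fun_mul (hasDerivAt_cos φ)).fun_mul
    (hasDerivAt_ellipticDelta hm φ)).fun_div
    (((hasDerivAt_sin φ).fun_pow 2).const_mul m |>.const_add 1) (one_add_mul_sin_sq_pos hm₀ φ).ne'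
    |>.const_mul (2 * m / (1 + m))
  refine h.congr_deriv ?_
  have hD := one_add_mul_sin_sq_pos hm₀ φ
  have hΔ := ellipticDelta_pos hm φ
  have hΔ2 := ellipticDelta_sq hm φ
  have hc2 := cos_sq' φ
  have hm' : 1 + m ≠ 0 := by linarith
  unfold gaussIntegrand
  set s := sin φ
  set c := cos φ
  set d := ellipticDelta m φ
  set D := 1 + m * s ^ 2
  calc _ = 2 * m / (1 + m) * (((c ^ 2 - s ^ 2) * d ^ 2 * D - m ^ 2 * s ^ 2 * c ^ 2 * D
          - 2 * m * s ^ 2 * c ^ 2 * d ^ 2) / (d * D ^ 2)) := by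
        field_simp
        ring
    _ = ((1 + m) ^ 2 * (1 - m * s ^ 2) ^ 2 - 2 * d ^ 2 * D ^ 2 + (1 - m ^ 2) * D ^ 2)
          / ((1 + m) * D ^ 2 * d) := by
        rw [hc2, hΔ2]
        field_simp
        ring
    _ = _ := by
        field_simp
        ring

theorem integral_gaussIntegrand (hm₀ : -1 < m) (hm₁ : m < 1) :
    ∫ φ in 0..π / 2, gaussIntegrand m φ = 2 / (1 + m) * Eel m - (1 - m) * Kel m := by
  have hm : m ^ 2 < 1 := by nlinarith
  have hΔ := ellipticDelta_pos hm
  have hΔinv : Continuous fun φ ↦ 1 / ellipticDelta m φ :=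
    continuous_const.div (continuous_ellipticDelta m) fun φ ↦ (hΔ φ).ne'
  have hI : Continuous (gaussIntegrand m) :=
    Continuous.div (by fun_prop) (by fun_prop)
      fun φ ↦ (mul_pos (pow_pos (one_add_mul_sin_sq_pos hm₀ φ) 2) (hΔ φ)).ne'
  have hftc := integral_eq_sub_of_hasDerivAt (fun φ _ ↦ hasDerivAt_gaussCorrection hm₀ hm₁ φ)
    ((hI.sub (by fun_prop)).intervalIntegrable 0 (π / 2))
  simp only [gaussCorrection, sin_zero, cos_pi_div_two, zero_mul, mul_zero, zero_div,
    sub_zero] at hftc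
  rw [integral_sub (hI.intervalIntegrable _ _) ((by fun_prop : Continuous _).intervalIntegrable _ _),
    integral_sub ((by fun_prop : Continuous _).intervalIntegrable _ _)
      ((by fun_prop : Continuous _).intervalIntegrable _ _),
    intervalIntegral.integral_const_mul, intervalIntegral.integral_const_mul] at hftc
  rw [Eel_eq_integral_ellipticDelta, Kel_eq_integral_ellipticDelta]
  linarith

end gaussIntegrand

theorem gauss_transform_E (k k' k₁ : ℝ) (hk0 : 0 < k) (hk1 : k < 1)
    (hk' : k' = Real.sqrt (1 - k^2)) (hk₁ : k₁ = (1 - k') / (1 + k')) :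
    Eel k = (1 + k') * Eel k₁ - k' * (1 + k₁) * Kel k₁ := by
  have hk : 0 < 1 - k ^ 2 := by nlinarith
  have hk'pos : 0 < k' := hk' ▸ sqrt_pos.2 hk
  have hk'sq : k' ^ 2 = 1 - k ^ 2 := hk' ▸ sq_sqrt hk.le
  have hk'₁ : 0 < 1 + k' := by linarith
  have hm₀ : -1 < k₁ := by rw [hk₁, lt_div_iff₀ hk'₁]; linarith
  have hm₁ : k₁ < 1 := by rw [hk₁, div_lt_one hk'₁]; linarith
  have hmod : k ^ 2 = 4 * k₁ / (1 + k₁) ^ 2 := by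
    rw [hk₁]
    field_simp
    linear_combination 4 * hk'sq
  have hE : 2 / (1 + k₁) = 1 + k' := by
    rw [hk₁]
    field_simp
    ring
  have hK : 1 - k₁ = k' * (1 + k₁) := by
    rw [hk₁]
    field_simp
    ring
  rw [Eel_eq_integral_gaussIntegrand hm₀ hm₁ hmod, integral_gaussIntegrand hm₀ hm₁, hE, hK]
end

section
/- For real numbers 0 < b̃ < ã, the integral ∫_0^∞ √((ã² + t²)/(b̃² + t²)³) dt equals (1/ã)·E(k)/(1-k²) where k² = 1 - b̃²/ã². -/
/-! The substitution `t = b tan θ` turns `b² + t²` into `b² / cos² θ` and `a² + t²` into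
`a² (1 - k² sin² θ) / cos² θ`, so that together with `dt = b dθ / cos² θ` the integrand becomes
`(a / b²) √(1 - k² sin² θ)` on `(0, π/2)`; finally `a / b² = (1 / a) / (1 - k²)`. -/

open Real MeasureTheory Set Filter

theorem image_const_mul_tan_Ioo {b : ℝ} (hb : 0 < b) :
    (fun θ => b * tan θ) '' Ioo 0 (π / 2) = Ioi 0 := by
  ext t
  constructor
  · rintro ⟨θ, ⟨hθ₀, hθ₁⟩, rfl⟩
    exact mul_pos hb (tan_pos_of_pos_of_lt_pi_div_two hθ₀ hθ₁)
  · intro ht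
    refine ⟨arctan (t / b), ⟨arctan_pos.2 (div_pos ht hb), arctan_lt_pi_div_two _⟩, ?_⟩
    simp only [tan_arctan]
    field_simp

theorem injOn_const_mul_tan_Ioo {b : ℝ} (hb : b ≠ 0) :
    InjOn (fun θ => b * tan θ) (Ioo 0 (π / 2)) := fun _ hx _ hy hxy =>
  injOn_tan.mono (Ioo_subset_Ioo_left (by linarith [pi_div_two_pos])) hx hy
    (mul_left_cancel₀ hb hxy)

theorem integral_Ioi_eq_integral_const_mul_tan {E : Type*} [NormedAddCommGroup E]
    [NormedSpace ℝ E] {b : ℝ} (hb : 0 < b) (g : ℝ → E) :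
    ∫ t in Ioi 0, g t = ∫ θ in Ioo 0 (π / 2), (b / cos θ ^ 2) • g (b * tan θ) := by
  have hderiv : ∀ θ ∈ Ioo 0 (π / 2),
      HasDerivWithinAt (fun θ => b * tan θ) (b / cos θ ^ 2) (Ioo 0 (π / 2)) θ := by
    intro θ hθ
    have hcos : cos θ ≠ 0 := (cos_pos_of_mem_Ioo ⟨by linarith [hθ.1, pi_div_two_pos], hθ.2⟩).ne'
    simpa only [mul_one_div] using ((hasDerivAt_tan hcos).const_mul b).hasDerivWithinAt
  rw [← image_const_mul_tan_Ioo hb, integral_image_eq_integral_abs_deriv_smul measurableSet_Ioo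
    hderiv (injOn_const_mul_tan_Ioo hb.ne')]
  refine setIntegral_congr_fun measurableSet_Ioo fun θ _ => ?_
  rw [abs_of_nonneg (by positivity)]

theorem sq_add_sq_mul_tan {θ : ℝ} (hθ : cos θ ≠ 0) (a b : ℝ) :
    a ^ 2 + (b * tan θ) ^ 2 = (a ^ 2 - (a ^ 2 - b ^ 2) * sin θ ^ 2) / cos θ ^ 2 := by
  rw [tan_eq_sin_div_cos, eq_div_iff (pow_ne_zero 2 hθ)]
  field_simp
  rw [cos_sq']
  ring

theorem mul_sqrt_ratio_sq_add_sq_mul_tan {a b θ : ℝ} (ha : 0 < a) (hb : 0 < b)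
    (hθ : 0 < cos θ) :
    b / cos θ ^ 2 * √((a ^ 2 + (b * tan θ) ^ 2) / (b ^ 2 + (b * tan θ) ^ 2) ^ 3)
      = a / b ^ 2 * √(1 - (1 - b ^ 2 / a ^ 2) * sin θ ^ 2) := by
  have hratio : (a ^ 2 + (b * tan θ) ^ 2) / (b ^ 2 + (b * tan θ) ^ 2) ^ 3
      = (a * cos θ ^ 2 / b ^ 3) ^ 2 * (1 - (1 - b ^ 2 / a ^ 2) * sin θ ^ 2) := by
    rw [sq_add_sq_mul_tan hθ.ne', sq_add_sq_mul_tan hθ.ne', sub_self, zero_mul, sub_zero]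
    field_simp
  rw [hratio, sqrt_mul (sq_nonneg _), sqrt_sq (by positivity)]
  field_simp

theorem integral_sqrt_ratio_general (a b k : ℝ) (hb : 0 < b) (hab : b < a)
    (hk : k^2 = 1 - b^2 / a^2) :
    ∫ t in Set.Ioi (0:ℝ), Real.sqrt ((a^2 + t^2) / (b^2 + t^2)^3)
      = (1 / a) * Eel k / (1 - k^2) := by
  have ha : 0 < a := hb.trans hab
  have hsubst : ∀ θ ∈ Ioo 0 (π / 2),
      (b / cos θ ^ 2) • √((a ^ 2 + (b * tan θ) ^ 2) / (b ^ 2 + (b * tan θ) ^ 2) ^ 3)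
        = a / b ^ 2 * √(1 - k ^ 2 * sin θ ^ 2) := fun θ hθ => by
    rw [smul_eq_mul, hk]
    exact mul_sqrt_ratio_sq_add_sq_mul_tan ha hb
      (cos_pos_of_mem_Ioo ⟨by linarith [hθ.1, pi_div_two_pos], hθ.2⟩)
  have hEel : ∫ θ in Ioo 0 (π / 2), √(1 - k ^ 2 * sin θ ^ 2) = Eel k := by
    rw [Eel, intervalIntegral.integral_of_le pi_div_two_pos.le, integral_Ioc_eq_integral_Ioo]
  rw [integral_Ioi_eq_integral_const_mul_tan hb, setIntegral_congr_fun measurableSet_Ioo hsubst,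
    integral_const_mul, hEel, hk]
  field_simp
  ring

theorem integral_sqrt_ratio (a b k : ℝ) (hb : 0 < b) (hab : b < a)
    (hk0 : 0 < k) (hk : k^2 = 1 - b^2 / a^2) :
    ∫ t in Set.Ioi (0:ℝ), Real.sqrt ((a^2 + t^2) / (b^2 + t^2)^3)
      = (1 / a) * Eel k / (1 - k^2) :=
  integral_sqrt_ratio_general a b k hb hab hk
end

section
/- Define W_nod(c) = 2π(1+c)E(2√c/(1+c)) for c > 1. Then W_nod is differentiable with dW_nod/dc = 2πE(1/c), and lim_{c→1⁺} W_nod(c) = 4π. -/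
/-!
With `k = 2√c / (1 + c)` and `t = 2θ`, the identity `(1 + c)² (1 - k² sin² θ) = 1 + c² + 2c cos 2θ`
gives `W(c) = π ∫₀^π |c + e^{it}| dt`. Differentiating under the integral sign gives
`π ∫₀^π cos φ dt` with `φ(t) = arg (c + e^{it})`. By the law of sines in the triangle
`0, c, c + e^{it}`, the angle `s = t - φ` satisfies `sin s = c sin φ`, so
`cos φ = √(1 - sin² s / c²)`; as `ds = dt - dφ` and `φ` vanishes at `0` and `π`,
`∫₀^π cos φ dt = ∫₀^π √(1 - sin² s / c²) ds = 2 E(1/c)`.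
The limit at `c = 1` is `W(1) = 4π E(1) = 4π`, by continuity of `E`.
-/

open Real MeasureTheory Set Filter

@[fun_prop]
theorem continuous_Eel : Continuous Eel :=
  intervalIntegral.continuous_parametric_intervalIntegral_of_continuous' (by fun_prop) _ _

theorem Eel_one : Eel 1 = 1 := by
  have h : ∀ θ ∈ uIcc 0 (π / 2), √(1 - 1 ^ 2 * sin θ ^ 2) = cos θ := by
    intro θ hθ
    rw [uIcc_of_le (by positivity)] at hθ
    rw [one_pow, one_mul, ← cos_sq',
      sqrt_sq (cos_nonneg_of_mem_Icc ⟨by linarith [hθ.1, pi_pos], hθ.2⟩)]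
  rw [Eel, intervalIntegral.integral_congr h]
  simp

theorem two_mul_Eel (k : ℝ) : 2 * Eel k = ∫ s in 0..π, √(1 - k ^ 2 * sin s ^ 2) := by
  have hint : ∀ a b, IntervalIntegrable (fun s => √(1 - k ^ 2 * sin s ^ 2)) volume a b :=
    fun a b => (by fun_prop : Continuous _).intervalIntegrable a b
  have hsymm : ∫ s in π / 2..π, √(1 - k ^ 2 * sin s ^ 2) = Eel k := by
    simpa [Eel, sin_pi_sub, show π - π / 2 = π / 2 by ring] using
      (intervalIntegral.integral_comp_sub_left (fun s => √(1 - k ^ 2 * sin s ^ 2)) π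
        (a := 0) (b := π / 2)).symm
  rw [← intervalIntegral.integral_add_adjacent_intervals (hint 0 (π / 2)) (hint (π / 2) π), hsymm,
    Eel, two_mul]

theorem one_add_sq_add_two_mul_cos (c t : ℝ) :
    1 + c ^ 2 + 2 * c * cos t = (c + cos t) ^ 2 + sin t ^ 2 := by
  linear_combination -sin_sq_add_cos_sq t

theorem two_mul_one_add_mul_Eel {c : ℝ} (hc : 0 ≤ c) :
    2 * ((1 + c) * Eel (2 * √c / (1 + c))) = ∫ t in 0..π, √(1 + c ^ 2 + 2 * c * cos t) := by
  have hpt : ∀ θ, (1 + c) * √(1 - (2 * √c / (1 + c)) ^ 2 * sin θ ^ 2)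
      = √(1 + c ^ 2 + 2 * c * cos (2 * θ)) := by
    intro θ
    nth_rw 1 [← sqrt_sq (by positivity : 0 ≤ 1 + c)]
    rw [← sqrt_mul (sq_nonneg _), cos_two_mul, cos_sq', div_pow, mul_pow, sq_sqrt hc]
    congr 1
    field_simp
    ring
  rw [Eel, ← intervalIntegral.integral_const_mul]
  simp only [hpt]
  rw [intervalIntegral.integral_comp_mul_left (fun t => √(1 + c ^ 2 + 2 * c * cos t)) two_ne_zero]
  simp [show 2 * (π / 2) = π by ring]

theorem one_add_sq_add_two_mul_cos_pos (c : ℝ) {t : ℝ} (ht : t ∈ Ioo 0 π) :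
    0 < 1 + c ^ 2 + 2 * c * cos t := by
  have := sin_pos_of_pos_of_lt_pi ht.1 ht.2
  rw [one_add_sq_add_two_mul_cos]; positivity

theorem hasDerivAt_integral_sqrt_one_add_sq_add_two_mul_cos (c : ℝ) :
    HasDerivAt (fun c => ∫ t in 0..π, √(1 + c ^ 2 + 2 * c * cos t))
      (∫ t in 0..π, (c + cos t) / √(1 + c ^ 2 + 2 * c * cos t)) c := by
  -- For `t ∈ (0, π)` the integrand is smooth in `y` for every `y`, with `y`-derivative bounded
  -- by `1` since `1 + y² + 2y cos t = (y + cos t)² + sin² t`.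
  have hIoo : ∀ᵐ t, t ∈ uIoc 0 π → t ∈ Ioo 0 π := by
    filter_upwards [volume.ae_ne π] with t hπ ht
    rw [uIoc_of_le pi_pos.le] at ht
    exact ⟨ht.1, ht.2.lt_of_ne hπ⟩
  refine (intervalIntegral.hasDerivAt_integral_of_dominated_loc_of_deriv_le (bound := fun _ => 1)
    (F' := fun y t => (y + cos t) / √(1 + y ^ 2 + 2 * y * cos t)) univ_mem
    (.of_forall fun _ => (by fun_prop : Continuous _).aestronglyMeasurable)
    ((by fun_prop : Continuous _).intervalIntegrable _ _)
    (by fun_prop : Measurable _).aestronglyMeasurable ?_ intervalIntegrable_const ?_).2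
  · filter_upwards [hIoo] with t ht ht' y _
    rw [norm_div, norm_of_nonneg (sqrt_nonneg _),
      div_le_one (sqrt_pos.2 (one_add_sq_add_two_mul_cos_pos y (ht ht'))),
      one_add_sq_add_two_mul_cos, norm_eq_abs, ← sqrt_sq_eq_abs]
    exact sqrt_le_sqrt (by nlinarith)
  · filter_upwards [hIoo] with t ht ht' y _
    have hq : HasDerivAt (fun y => 1 + y ^ 2 + 2 * y * cos t) (2 * (y + cos t)) y :=
      (((hasDerivAt_pow 2 y).const_add 1).add
        (((hasDerivAt_id y).const_mul 2).mul_const (cos t))).congr_deriv (by simp; ring)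
    refine (hq.sqrt (one_add_sq_add_two_mul_cos_pos y (ht ht')).ne').congr_deriv ?_
    field_simp

theorem Real.sqrt_one_add_div_sq {x : ℝ} (hx : 0 < x) (y : ℝ) :
    √(1 + (y / x) ^ 2) = √(x ^ 2 + y ^ 2) / x := by
  rw [← sqrt_sq hx.le, ← sqrt_div' _ (sq_nonneg x), sqrt_sq hx.le]
  congr 1
  field_simp

theorem Real.cos_arctan_div {x : ℝ} (hx : 0 < x) (y : ℝ) :
    cos (arctan (y / x)) = x / √(x ^ 2 + y ^ 2) := by
  rw [cos_arctan, sqrt_one_add_div_sq hx, one_div_div]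

theorem Real.sin_arctan_div {x : ℝ} (hx : 0 < x) (y : ℝ) :
    sin (arctan (y / x)) = y / √(x ^ 2 + y ^ 2) := by
  rw [sin_arctan, sqrt_one_add_div_sq hx, div_div_div_cancel_right₀ hx.ne']

theorem integral_add_cos_div_sqrt_eq_two_mul_Eel {c : ℝ} (hc : 1 < c) :
    ∫ t in 0..π, (c + cos t) / √(1 + c ^ 2 + 2 * c * cos t) = 2 * Eel (1 / c) := by
  set u : ℝ → ℝ := fun s => √(1 - (1 / c) ^ 2 * sin s ^ 2)
  set φ : ℝ → ℝ := fun t => arctan (sin t / (c + cos t))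
  have hd : ∀ t, 0 < c + cos t := fun t => by linarith [neg_one_le_cos t]
  have hcos : ∀ t, cos (φ t) = (c + cos t) / √(1 + c ^ 2 + 2 * c * cos t) := fun t => by
    rw [cos_arctan_div (hd t), one_add_sq_add_two_mul_cos]
  have hsin : ∀ t, sin (φ t) = sin t / √(1 + c ^ 2 + 2 * c * cos t) := fun t => by
    rw [sin_arctan_div (hd t), one_add_sq_add_two_mul_cos]
  have hsines : ∀ t, sin (t - φ t) = c * sin (φ t) := fun t => by
    rw [sin_sub, hcos, hsin]; ring
  have hu : ∀ t, u (t - φ t) = cos (φ t) := fun t => by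
    simp only [u]
    rw [hsines, mul_pow, ← mul_assoc, ← mul_pow, one_div_mul_cancel (by positivity), one_pow,
      one_mul, ← cos_sq', sqrt_sq (cos_arctan_pos _).le]
  have hφ : ContDiff ℝ 1 φ :=
    (contDiff_sin.div (contDiff_const.add contDiff_cos) fun t => (hd t).ne').arctan
  have hφ' : ∀ t, HasDerivAt φ (deriv φ t) t := fun t =>
    ((hφ.differentiable one_ne_zero) t).hasDerivAt
  have hψ' : ∀ t, HasDerivAt (fun t => t - φ t) (1 - deriv φ t) t := fun t =>
    (hasDerivAt_id t).sub (hφ' t)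
  calc ∫ t in 0..π, (c + cos t) / √(1 + c ^ 2 + 2 * c * cos t)
      = ∫ t in 0..π, ((cos ∘ φ) t * deriv φ t + (u ∘ fun t => t - φ t) t * (1 - deriv φ t)) := by
        refine intervalIntegral.integral_congr fun t _ => ?_
        simp only [Function.comp, hu, hcos]
        ring
    _ = (∫ t in 0..π, (cos ∘ φ) t * deriv φ t)
          + ∫ t in 0..π, (u ∘ fun t => t - φ t) t * (1 - deriv φ t) :=
        intervalIntegral.integral_add ((by fun_prop : Continuous _).intervalIntegrable _ _)
          ((by fun_prop : Continuous _).intervalIntegrable _ _)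
    _ = ∫ s in 0..π, u s := by
        rw [intervalIntegral.integral_comp_mul_deriv (fun t _ => hφ' t) (by fun_prop) (by fun_prop),
          intervalIntegral.integral_comp_mul_deriv (fun t _ => hψ' t) (by fun_prop) (by fun_prop)]
        simp [φ]
    _ = 2 * Eel (1 / c) := (two_mul_Eel _).symm

theorem nodoid_willmore_energy :
    (∀ c : ℝ, 1 < c →
      HasDerivAt (fun c : ℝ => 2 * π * (1 + c) * Eel (2 * Real.sqrt c / (1 + c)))
        (2 * π * Eel (1/c)) c) ∧
    Tendsto (fun c : ℝ => 2 * π * (1 + c) * Eel (2 * Real.sqrt c / (1 + c)))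
      (nhdsWithin 1 (Set.Ioi 1)) (nhds (4 * π)) := by
  refine ⟨fun c hc => ?_, ?_⟩
  · have hW : (fun c : ℝ => 2 * π * (1 + c) * Eel (2 * √c / (1 + c)))
          =ᶠ[nhds c] fun c => π * ∫ t in 0..π, √(1 + c ^ 2 + 2 * c * cos t) := by
      filter_upwards [Ioi_mem_nhds (zero_lt_one.trans hc)] with y hy
      rw [← two_mul_one_add_mul_Eel hy.le]
      ring
    have hderiv := (hasDerivAt_integral_sqrt_one_add_sq_add_two_mul_cos c).const_mul π
    rw [integral_add_cos_div_sqrt_eq_two_mul_Eel hc] at hderiv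
    exact (hderiv.congr_of_eventuallyEq hW).congr_deriv (by ring)
  · have hcont : ContinuousAt (fun c : ℝ => 2 * π * (1 + c) * Eel (2 * √c / (1 + c))) 1 := by
      fun_prop (disch := norm_num)
    convert hcont.tendsto.mono_left nhdsWithin_le_nhds using 2
    norm_num [Eel_one]
    ring
end
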